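/- arXiv:2402.17855 — 3 statements merged into one kernel-verified Lean document; each statement's English description precedes it below -/
import Mathlib

section
/- Let X be an r-uniform hypergraph and k a positive integer with Δ(X) ≥ 3k(log(2k) + (r−1)·log v(X)). Then there exists a partition V_1, …, V_k of V(X) such that |V_i| ≤ 2·v(X)/k for all i, and for every (r−1)-subset S of V(X) and every i ∈ [k], the number of vertices v ∈ V_i with S ∪ {v} ∈ E(X) is at most 2·Δ(X)/k. -/
/-!
Colour the vertices uniformly at random with `k` colours. For a fixed vertex set `A` with
`|A| ≤ Θ` and a fixed colour `i`, the exponential moment `E[2^{|A ∩ V_i|}] = (1 + 1/k)^{|A|}`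
is at most `e^{Θ/k}`, so by Markov's inequality `|A ∩ V_i| > 2Θ/k` has probability at most
`e^{-(2 log 2 - 1) Θ/k} < e^{-Δ/(3k)} ≤ 1/(2k v(X)^{r-1})`. Applied to `A = V(X)` and to the
links `A = X(S)`, a union bound over these `(C(v(X), r-1) + 1) k ≤ 2k v(X)^{r-1}` events leaves
a colouring avoiding all of them. Probabilities appear as counts of colourings `V → Fin k`.
-/

open Finset Real

section

variable {V : Type*} [Fintype V] [DecidableEq V] {k : ℕ}

theorem sum_pow_card_filter_apply_eq (A : Finset V) (i : Fin k) (x : ℝ) :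
    ∑ P : V → Fin k, x ^ #{v ∈ A | P v = i} = (k - 1 + x) ^ #A * (k : ℝ) ^ #Aᶜ := by
  have hterm (P : V → Fin k) :
      x ^ #{v ∈ A | P v = i} = ∏ v, if v ∈ A ∧ P v = i then x else 1 := by
    rw [← prod_const, prod_filter, ← Fintype.prod_ite_mem]
    simp only [ite_and]
  have hfibre (v : V) :
      ∑ j : Fin k, (if v ∈ A ∧ j = i then x else 1) = if v ∈ A then k - 1 + x else k := by
    split_ifs with hv
    · have (j : Fin k) : (if j = i then x else 1) = 1 + if j = i then x - 1 else 0 := by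
        split_ifs <;> ring
      simp only [hv, true_and, this, sum_add_distrib, sum_const, card_univ, Fintype.card_fin,
        nsmul_eq_mul, mul_one, sum_ite_eq', mem_univ, ↓reduceIte]
      ring
    · simp [hv]
  simp_rw [hterm, ← Fintype.prod_sum (fun v j => if v ∈ A ∧ j = i then x else 1), hfibre,
    prod_ite, prod_const, filter_not, filter_univ_mem, compl_eq_univ_sdiff]

noncomputable def overloadedColorings (A : Finset V) (i : Fin k) (t : ℝ) : Finset (V → Fin k) :=
  {P | t < #{v ∈ A | P v = i}}

theorem card_overloadedColorings_mul_le (A : Finset V) (i : Fin k) (t : ℝ) :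
    #(overloadedColorings A i t) * (2 : ℝ) ^ t ≤ (k + 1) ^ #A * (k : ℝ) ^ #Aᶜ :=
  calc #(overloadedColorings A i t) * (2 : ℝ) ^ t
      = ∑ _P ∈ overloadedColorings A i t, (2 : ℝ) ^ t := by rw [sum_const, nsmul_eq_mul]
    _ ≤ ∑ P ∈ overloadedColorings A i t, (2 : ℝ) ^ #{v ∈ A | P v = i} := by
      refine sum_le_sum fun P hP => ?_
      rw [← rpow_natCast]
      exact rpow_le_rpow_of_exponent_le one_le_two (mem_filter.1 hP).2.le
    _ ≤ ∑ P : V → Fin k, (2 : ℝ) ^ #{v ∈ A | P v = i} :=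
      sum_le_sum_of_subset_of_nonneg (subset_univ _) fun _ _ _ => by positivity
    _ = (k + 1) ^ #A * (k : ℝ) ^ #Aᶜ := by rw [sum_pow_card_filter_apply_eq]; ring

theorem add_one_pow_le_pow_mul_exp {a : ℝ} (ha : 0 < a) (m : ℕ) :
    (a + 1) ^ m ≤ a ^ m * exp (m / a) := by
  have h : a + 1 ≤ a * exp (1 / a) := by
    have := add_one_le_exp (1 / a)
    calc a + 1 = a * (1 / a + 1) := by field_simp; ring
      _ ≤ a * exp (1 / a) := by gcongr
  calc (a + 1) ^ m ≤ (a * exp (1 / a)) ^ m := by gcongr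
    _ = a ^ m * exp (m / a) := by rw [mul_pow, ← exp_nat_mul, mul_one_div]

theorem card_overloadedColorings_le (A : Finset V) (i : Fin k) {Θ : ℝ} (hA : #A ≤ Θ) :
    (#(overloadedColorings A i (2 * Θ / k)) : ℝ)
      ≤ k ^ Fintype.card V * exp (-((2 * log 2 - 1) * Θ / k)) := by
  have hk : (0 : ℝ) < k := by exact_mod_cast i.pos
  set t := 2 * Θ / k
  have hmoment : (k + 1 : ℝ) ^ #A * k ^ #Aᶜ ≤ k ^ Fintype.card V * exp (#A / k) :=
    calc (k + 1 : ℝ) ^ #A * k ^ #Aᶜ ≤ k ^ #A * exp (#A / k) * k ^ #Aᶜ := by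
          gcongr; exact add_one_pow_le_pow_mul_exp hk _
      _ = k ^ Fintype.card V * exp (#A / k) := by rw [← card_add_card_compl A, pow_add]; ring
  have hexp : #A / k - log 2 * t ≤ -((2 * log 2 - 1) * Θ / k) := by
    have : -((2 * log 2 - 1) * Θ / k) - (#A / k - log 2 * t) = (Θ - #A) / k := by
      simp only [t]; ring
    linarith [div_nonneg (sub_nonneg.2 hA) hk.le]
  have h2t : (2 : ℝ) ^ t = exp (log 2 * t) := rpow_def_of_pos two_pos t
  calc (#(overloadedColorings A i t) : ℝ)
      = #(overloadedColorings A i t) * 2 ^ t * exp (-(log 2 * t)) := by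
        rw [h2t, mul_assoc, ← exp_add, add_neg_cancel, exp_zero, mul_one]
    _ ≤ k ^ Fintype.card V * exp (#A / k) * exp (-(log 2 * t)) :=
        mul_le_mul_of_nonneg_right ((card_overloadedColorings_mul_le A i t).trans hmoment)
          (exp_pos _).le
    _ = k ^ Fintype.card V * exp (#A / k - log 2 * t) := by
        rw [mul_assoc, ← exp_add, sub_eq_add_neg]
    _ ≤ k ^ Fintype.card V * exp (-((2 * log 2 - 1) * Θ / k)) := by gcongr

namespace Hypergraph

def link (E : Finset (Finset V)) (S : Finset V) : Finset V := {v | insert v S ∈ E}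

variable {r : ℕ} {E : Finset (Finset V)} {S : Finset V}

@[simp]
theorem mem_link {v : V} : v ∈ link E S ↔ insert v S ∈ E := by simp [link]

theorem card_link_le_card_filter_superset (hr : 1 ≤ r) (hE : ∀ e ∈ E, #e = r)
    (hS : #S = r - 1) : #(link E S) ≤ #{e ∈ E | S ⊆ e} := by
  refine card_le_card_of_injOn (insert · S) (fun v hv => ?_) fun v hv w hw hvw => ?_
  · rw [mem_coe, mem_link] at hv
    exact mem_filter.2 ⟨hv, subset_insert v S⟩
  · have notMem_of_mem_link {u : V} (hu : u ∈ (link E S : Set V)) : u ∉ S := fun huS => by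
      have := hE _ (mem_link.1 hu)
      rw [insert_eq_of_mem huS] at this
      omega
    exact (insert_inj (notMem_of_mem_link hv)).1 hvw

theorem card_filter_superset_le (hr : 1 ≤ r) (hE : ∀ e ∈ E, #e = r) (hS : #S = r - 1) :
    #{e ∈ E | S ⊆ e} ≤ Fintype.card V := by
  have hsub : {e ∈ E | S ⊆ e} ⊆ univ.image (insert · S) := by
    intro e he
    obtain ⟨heE, hSe⟩ := mem_filter.1 he
    obtain ⟨v, hv⟩ := card_eq_one.1 (by rw [card_sdiff_of_subset hSe, hE e heE, hS]; omega :
      #(e \ S) = 1)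
    exact mem_image.2 ⟨v, mem_univ v, by rw [← sdiff_union_of_subset hSe, hv, insert_eq]⟩
  exact (card_le_card hsub).trans card_image_le

end Hypergraph

end

theorem exists_forall_notMem_of_card_mul_lt {α ι : Type*} [Fintype α] [DecidableEq α]
    (I : Finset ι) (B : ι → Finset α) {b : ℝ} (hB : ∀ e ∈ I, (#(B e) : ℝ) ≤ b)
    (hI : #I * b < Fintype.card α) : ∃ a, ∀ e ∈ I, a ∉ B e := by
  have hunion : #(I.biUnion B) < #(univ : Finset α) := by
    have : (#(I.biUnion B) : ℝ) ≤ #I * b :=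
      calc (#(I.biUnion B) : ℝ) ≤ ∑ e ∈ I, (#(B e) : ℝ) := mod_cast card_biUnion_le
        _ ≤ #I * b := by simpa using sum_le_sum hB
    rw [card_univ]; exact_mod_cast this.trans_lt hI
  obtain ⟨a, -, ha⟩ := exists_mem_notMem_of_card_lt_card hunion
  exact ⟨a, fun e he hae => ha (mem_biUnion.2 ⟨e, he, hae⟩)⟩

theorem one_third_lt_two_mul_log_two_sub_one : 1 / 3 < 2 * log 2 - 1 := by
  linarith [log_two_gt_d9]

theorem choose_add_one_mul_mul_exp_lt_one {k n r : ℕ} {Δ : ℝ} (hk : 0 < k) (hn : 0 < n)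
    (hΔ : 0 < Δ) (h : 3 * k * (log (2 * k) + r * log n) ≤ Δ) :
    ((n.choose r + 1) * k : ℕ) * exp (-((2 * log 2 - 1) * Δ / k)) < 1 := by
  have hk' : (0 : ℝ) < k := by exact_mod_cast hk
  have hcount : (((n.choose r + 1) * k : ℕ) : ℝ) ≤ 2 * k * (n : ℝ) ^ r := by
    have : n.choose r + 1 ≤ 2 * n ^ r := by
      have := Nat.choose_le_pow n r
      have := Nat.one_le_pow r n hn
      omega
    exact_mod_cast (by nlinarith : (n.choose r + 1) * k ≤ 2 * k * n ^ r)
  have hlog : log (2 * k * (n : ℝ) ^ r) < (2 * log 2 - 1) * Δ / k := by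
    rw [log_mul (by positivity) (by positivity), log_pow, lt_div_iff₀ hk']
    nlinarith [mul_pos (sub_pos.2 one_third_lt_two_mul_log_two_sub_one) hΔ]
  calc (((n.choose r + 1) * k : ℕ) : ℝ) * exp (-((2 * log 2 - 1) * Δ / k))
      ≤ 2 * k * (n : ℝ) ^ r * exp (-((2 * log 2 - 1) * Δ / k)) := by gcongr
    _ < 1 := by
      rw [exp_neg, ← div_eq_mul_inv, div_lt_one (exp_pos _)]
      exact (log_lt_iff_lt_exp (by positivity)).1 hlog

theorem exists_coloring_forall_card_filter_le {V ι : Type*} [Fintype V] [DecidableEq V] {k : ℕ}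
    (hk : 0 < k) (T : Finset ι) (A : ι → Finset V) {Θ : ℝ} (hΘ : Θ ≤ Fintype.card V)
    (hA : ∀ S ∈ T, #(A S) ≤ Θ)
    (hT : (((#T + 1) * k : ℕ) : ℝ) * exp (-((2 * log 2 - 1) * Θ / k)) < 1) :
    ∃ P : V → Fin k, (∀ i, (#{v | P v = i} : ℝ) ≤ 2 * Fintype.card V / k) ∧
      ∀ S ∈ T, ∀ i, (#{v ∈ A S | P v = i} : ℝ) ≤ 2 * Θ / k := by
  set n := Fintype.card V
  set b : ℝ := k ^ n * exp (-((2 * log 2 - 1) * Θ / k))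
  -- `none` indexes the whole vertex set, i.e. the constraints on the sizes of the parts
  let B : Option ι × Fin k → Finset (V → Fin k) := fun e =>
    e.1.elim (overloadedColorings univ e.2 (2 * n / k))
      (fun S => overloadedColorings (A S) e.2 (2 * Θ / k))
  have hB : ∀ e ∈ insertNone T ×ˢ (univ : Finset (Fin k)), (#(B e) : ℝ) ≤ b := by
    rintro ⟨_ | S, i⟩ he
    · calc (#(B (none, i)) : ℝ) ≤ k ^ n * exp (-((2 * log 2 - 1) * n / k)) :=
            card_overloadedColorings_le univ i (by simp [n])
        _ ≤ k ^ n * exp (-((2 * log 2 - 1) * Θ / k)) := by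
            gcongr
            linarith [one_third_lt_two_mul_log_two_sub_one]
    · exact card_overloadedColorings_le _ i (hA S (by simpa using he))
  have hI : (#(insertNone T ×ˢ (univ : Finset (Fin k))) : ℝ) * b
      < Fintype.card (V → Fin k) := by
    rw [card_product, card_insertNone, card_fin, Fintype.card_fun, Fintype.card_fin, Nat.cast_pow]
    calc (((#T + 1) * k : ℕ) : ℝ) * b
        = (((#T + 1) * k : ℕ) * exp (-((2 * log 2 - 1) * Θ / k))) * k ^ n := by ring
      _ < 1 * k ^ n := by gcongr
      _ = k ^ n := one_mul _
  obtain ⟨P, hP⟩ := exists_forall_notMem_of_card_mul_lt _ B hB hI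
  refine ⟨P, fun i => ?_, fun S hS i => ?_⟩
  · simpa [B, overloadedColorings] using hP (none, i) (by simp)
  · simpa [B, overloadedColorings] using hP (some S, i) (by simpa using hS)

/-- Proposition 3.11 (quasirandom partition): if `X` is an `r`-uniform hypergraph with
maximum `(r−1)`-degree `Δ(X) ≥ 3k(log(2k) + (r−1) log v(X))`, then there is a partition
of `V(X)` into `k` parts `V_1,…,V_k` with `|V_i| ≤ 2 v(X)/k` and, for every `(r−1)`-set
`S` and each `i`, `|X(S) ∩ V_i| ≤ 2 Δ(X)/k`. -/
theorem quasirandom_partition {V : Type*} [Fintype V] [DecidableEq V]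
    (r k : ℕ) (hr : 1 ≤ r) (hk : 1 ≤ k)
    (E : Finset (Finset V)) (hunif : ∀ e ∈ E, e.card = r)
    (Δ : ℕ)
    (hΔ : Δ = Finset.sup ((Finset.univ : Finset V).powersetCard (r - 1))
        (fun S => (E.filter (fun e => S ⊆ e)).card))
    (hbig : (3 * k : ℝ) * (Real.log (2 * k) + (r - 1 : ℕ) * Real.log (Fintype.card V)) ≤ Δ) :
    ∃ P : V → Fin k,
      (∀ i : Fin k,
        ((Finset.univ.filter (fun v => P v = i)).card : ℝ) ≤ 2 * (Fintype.card V : ℝ) / k) ∧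
      ∀ S ∈ (Finset.univ : Finset V).powersetCard (r - 1), ∀ i : Fin k,
        ((Finset.univ.filter (fun v => P v = i ∧ insert v S ∈ E)).card : ℝ)
          ≤ 2 * (Δ : ℝ) / k := by
  set n := Fintype.card V
  have hΔpos : (0 : ℝ) < Δ := by
    have : 0 < log (2 * k : ℝ) := log_pos (by norm_cast; omega)
    exact lt_of_lt_of_le (by positivity) hbig
  have hΔn : Δ ≤ n := hΔ ▸ Finset.sup_le fun S hS =>
    Hypergraph.card_filter_superset_le hr hunif (mem_powersetCard.1 hS).2
  have hlink (S) (hS : S ∈ powersetCard (r - 1) univ) :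
      (#(Hypergraph.link E S) : ℝ) ≤ Δ := by
    have h : #(Hypergraph.link E S) ≤ Δ := hΔ ▸
      (Hypergraph.card_link_le_card_filter_superset hr hunif (mem_powersetCard.1 hS).2).trans
        (le_sup (f := fun S => #{e ∈ E | S ⊆ e}) hS)
    exact_mod_cast h
  have hn : 0 < n := (Nat.cast_pos.1 hΔpos).trans_le hΔn
  obtain ⟨P, hsize, hcodegree⟩ :=
    exists_coloring_forall_card_filter_le hk _ _ (by exact_mod_cast hΔn) hlink (by
      rw [card_powersetCard, card_univ]
      exact choose_add_one_mul_mul_exp_lt_one hk hn hΔpos hbig)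
  refine ⟨P, hsize, fun S hS i => ?_⟩
  simpa [Hypergraph.link, filter_filter, and_comm] using hcodegree S hS i
end

section
/- Let q > r ≥ 1 and let S be an r-set of vertices. Let F = FakeEdge_q^r(S): take q−r new vertices x_1,…,x_{q−r} and, for each r-subset T ≠ S of S ∪ {x_1,…,x_{q−r}}, attach a copy of AntiEdge_q^r(T) (with its own fresh vertices). Then for every 0 ≤ i ≤ r−1 and every i-subset S' of S, the degree d_F(S') is congruent to +1 modulo C(q−i, r−i). -/
/-!
Work modulo `m = C(q-i, r-i)`, the number of `r`-subsets of a `q`-set containing a fixed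
`i`-set. Hence an anti-edge `AntiEdge(T)` contributes `-1` to `d(S')` when `S' ⊆ T` and `0`
otherwise. The centres `T ≠ S` containing `S'` are exactly the edges of `AntiEdge(S)` on `W`
that contain `S'`, so there are `≡ -1` of them, and `d_F(S') ≡ (-1)·(-1) = 1`.
-/

open Finset

section

variable {V : Type*} [DecidableEq V]

/-- `AntiEdge_q^r(T)` on a `q`-set `A ⊇ T`. -/
def antiEdge (r : ℕ) (A T : Finset V) : Finset (Finset V) := A.powersetCard r \ {T}

theorem natCast_card_antiEdge_filter_superset {r : ℕ} {A T S' : Finset V}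
    (hT : T ∈ A.powersetCard r) (hS' : #S' ≤ r) :
    (#{e ∈ antiEdge r A T | S' ⊆ e} : ZMod ((#A - #S').choose (r - #S'))) =
      if S' ⊆ T then -1 else 0 := by
  obtain ⟨hTA, hTr⟩ := mem_powersetCard.1 hT
  have hmem : T ∈ {e ∈ A.powersetCard r | S' ⊆ e} ↔ S' ⊆ T := by simp [hT]
  rw [antiEdge, sdiff_singleton_eq_erase, filter_erase, card_erase_eq_ite]
  by_cases hS'A : S' ⊆ A
  · have hr : r - #S' ≤ #A - #S' := by have := card_le_card hTA; omega
    rw [card_filter_powersetCard_subset S' A r hS'A hS']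
    by_cases hS'T : S' ⊆ T
    · rw [if_pos (hmem.2 hS'T), if_pos hS'T, Nat.cast_pred (Nat.choose_pos hr),
        ZMod.natCast_self, zero_sub]
    · rw [if_neg (mt hmem.1 hS'T), if_neg hS'T, ZMod.natCast_self]
  · have hS'T : ¬ S' ⊆ T := fun h => hS'A (h.trans hTA)
    have hempty : {e ∈ A.powersetCard r | S' ⊆ e} = ∅ :=
      filter_eq_empty_iff.2 fun e he h => hS'A (h.trans (mem_powersetCard.1 he).1)
    rw [if_neg (mt hmem.1 hS'T), if_neg hS'T, hempty, card_empty, Nat.cast_zero]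

end

theorem fakeEdge_degree_general {V : Type*} [DecidableEq V] (q r : ℕ)
    (S W : Finset V) (hS : S.card = r) (hSW : S ⊆ W) (hW : W.card = q)
    (WT : Finset V → Finset V)
    (hWT : ∀ T ∈ W.powersetCard r \ {S}, T ⊆ WT T ∧ (WT T).card = q)
    (F : Multiset (Finset V))
    (hF : F = ∑ T ∈ W.powersetCard r \ {S}, ((WT T).powersetCard r \ {T}).val)
    (i : ℕ) (S' : Finset V) (hS'S : S' ⊆ S) (hS' : S'.card = i) :
    Multiset.card (F.filter fun e => S' ⊆ e) ≡ 1 [MOD Nat.choose (q - i) (r - i)] := by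
  have hS'r : #S' ≤ r := hS ▸ card_le_card hS'S
  have hdegree : ∀ T ∈ antiEdge r W S,
      (#{e ∈ antiEdge r (WT T) T | S' ⊆ e} : ZMod ((q - i).choose (r - i))) =
        if S' ⊆ T then -1 else 0 := fun T hT => by
    obtain ⟨hTWT, hWTq⟩ := hWT T hT
    rw [← hWTq, ← hS']
    exact natCast_card_antiEdge_filter_superset
      (mem_powersetCard.2 ⟨hTWT, (mem_powersetCard.1 (mem_sdiff.1 hT).1).2⟩) hS'r
  have hcentres : (#{T ∈ antiEdge r W S | S' ⊆ T} : ZMod ((q - i).choose (r - i))) = -1 := by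
    rw [← hW, ← hS', natCast_card_antiEdge_filter_superset (mem_powersetCard.2 ⟨hSW, hS⟩) hS'r,
      if_pos hS'S]
  rw [← ZMod.natCast_eq_natCast_iff, hF, ← Multiset.countP_eq_card_filter,
    ← Multiset.coe_countPAddMonoidHom, map_sum]
  simp only [Multiset.coe_countPAddMonoidHom, Multiset.countP_eq_card_filter, ← filter_val,
    card_val, Nat.cast_sum, Nat.cast_one]
  change ∑ T ∈ antiEdge r W S,
    (#{e ∈ antiEdge r (WT T) T | S' ⊆ e} : ZMod ((q - i).choose (r - i))) = 1
  rw [sum_congr rfl hdegree, ← sum_filter, sum_const, nsmul_eq_mul, mul_neg_one, hcentres,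
    neg_neg]

/-- Fact 5.2(2): degrees in a fake edge. Let `S` be an `r`-set inside a `q`-set `W`
(`W \ S` are the `q−r` new vertices). For each `r`-subset `T ≠ S` of `W` attach an
anti-edge `AntiEdge_q^r(T)` on a `q`-set `WT T ⊇ T`, all fresh vertex sets `WT T \ T`
pairwise disjoint and disjoint from `W`. Let `F` (the fake edge) be the union of these
anti-edges. Then for every `0 ≤ i ≤ r−1` and `i`-subset `S'` of `S`,
`d_F(S') ≡ +1 (mod C(q−i, r−i))`. -/
theorem fakeEdge_degree {V : Type*} [DecidableEq V] (q r : ℕ) (hrq : r < q) (hr : 1 ≤ r)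
    (S W : Finset V) (hS : S.card = r) (hSW : S ⊆ W) (hW : W.card = q)
    (WT : Finset V → Finset V)
    (hWT : ∀ T ∈ W.powersetCard r \ {S}, T ⊆ WT T ∧ (WT T).card = q)
    (hfresh : ∀ T ∈ W.powersetCard r \ {S}, Disjoint (WT T \ T) W)
    (hdisj : ∀ T₁ ∈ W.powersetCard r \ {S}, ∀ T₂ ∈ W.powersetCard r \ {S}, T₁ ≠ T₂ →
      Disjoint (WT T₁ \ T₁) (WT T₂ \ T₂))
    (F : Multiset (Finset V))
    (hF : F = ∑ T ∈ W.powersetCard r \ {S}, ((WT T).powersetCard r \ {T}).val)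
    (i : ℕ) (hi : i ≤ r - 1) (S' : Finset V) (hS'S : S' ⊆ S) (hS' : S'.card = i) :
    Multiset.card (F.filter fun e => S' ⊆ e) ≡ 1 [MOD Nat.choose (q - i) (r - i)] :=
  fakeEdge_degree_general q r S W hS hSW hW WT hWT F hF i S' hS'S hS'
end

section
/- Let q > r ≥ 1 and suppose for every K_q^r-divisible hypergraph L there exists a K_q^r-absorber for L (i.e., a hypergraph A with V(L) ⊆ V(A), V(L) independent in A, and both A and L ∪ A admitting K_q^r decompositions). Then for every K_q^r-divisible hypergraph L there exists a K_q^r-absorber A for L together with a K_q^r decomposition Q of A ∪ L such that every Q ∈ Q satisfies |V(Q) ∩ V(L)| ≤ r, with equality only if V(Q) ∩ V(L) = V(e) for some edge e of L. -/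
/-- `K_q^r`-divisibility for hypergraphs given by their edge sets. -/
def DivisibleF {V : Type*} [DecidableEq V] (q r : ℕ) (L : Finset (Finset V)) : Prop :=
  ∀ i ≤ r - 1, ∀ S : Finset V, S.card = i →
    Nat.choose (q - i) (r - i) ∣ (L.filter fun e => S ⊆ e).card

/-- `G` admits a `K_q^r` decomposition. -/
def HasDecomp {V : Type*} [DecidableEq V] (q r : ℕ) (G : Finset (Finset V)) : Prop :=
  ∃ 𝓠 : Finset (Finset (Finset V)),
    (∀ H ∈ 𝓠, ∃ W : Finset V, W.card = q ∧ H = W.powersetCard r) ∧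
    (∀ H₁ ∈ 𝓠, ∀ H₂ ∈ 𝓠, H₁ ≠ H₂ → Disjoint H₁ H₂) ∧
    𝓠.biUnion id = G

/-- `A` is a `K_q^r`-absorber for `L`: `V(L)` is independent in `A` and both `A` and
`L ∪ A` admit `K_q^r` decompositions. -/
def IsAbsorber {V : Type*} [DecidableEq V] (q r : ℕ) (L A : Finset (Finset V)) : Prop :=
  (∀ e ∈ A, ¬ e ⊆ L.sup id) ∧ HasDecomp q r A ∧ HasDecomp q r (L ∪ A)

section BetterAbsorbersAux
open Finset

variable {V : Type*} [DecidableEq V]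

/-- number of `r`-subsets of `W` containing a fixed `S ⊆ W`. -/
lemma card_filter_powersetCard (W S : Finset V) (r : ℕ) (hSW : S ⊆ W) (hir : S.card ≤ r) :
    ((W.powersetCard r).filter (fun g => S ⊆ g)).card = (W.card - S.card).choose (r - S.card) := by
  have key : ((W.powersetCard r).filter (fun g => S ⊆ g)).card
      = ((W \ S).powersetCard (r - S.card)).card := by
    apply Finset.card_bij' (fun g _ => g \ S) (fun t _ => t ∪ S)
    · intro g hg
      rw [mem_filter, mem_powersetCard] at hg
      rw [mem_powersetCard]
      exact ⟨sdiff_subset_sdiff hg.1.1 le_rfl,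
        by rw [card_sdiff_of_subset hg.2, hg.1.2]⟩
    · intro t ht
      rw [mem_powersetCard] at ht
      have hdisj : Disjoint t S := (sdiff_disjoint.mono_left ht.1)
      rw [mem_filter, mem_powersetCard]
      refine ⟨⟨union_subset (ht.1.trans sdiff_subset) hSW, ?_⟩, subset_union_right⟩
      rw [card_union_of_disjoint hdisj, ht.2]
      omega
    · intro g hg
      rw [mem_filter] at hg
      exact sdiff_union_of_subset hg.2
    · intro t ht
      rw [mem_powersetCard] at ht
      exact union_sdiff_cancel_right (sdiff_disjoint.mono_left ht.1)
  rw [key, card_powersetCard, card_sdiff_of_subset hSW]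

/-- a finset of singletons whose support has size divisible by `q` decomposes into
`q`-blocks of singletons. -/
lemma hasDecomp_singletons (q : ℕ) (hq : 0 < q) (s : Finset V) (h : q ∣ s.card) :
    HasDecomp q 1 (s.image ({·})) := by
  induction s using Finset.strongInduction with
  | _ s ih =>
    rcases eq_or_ne s ∅ with rfl | hne
    · exact ⟨∅, by simp, by simp, by simp⟩
    · have hqs : q ≤ s.card := Nat.le_of_dvd (card_pos.mpr (nonempty_iff_ne_empty.mpr hne)) h
      obtain ⟨W, hWs, hWcard⟩ := Finset.exists_subset_card_eq hqs
      have hWne : W.Nonempty := card_pos.mp (by omega)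
      have hss : s \ W ⊂ s := by
        refine Finset.sdiff_ssubset ?_ hWne
        exact hWs
      have hdvd : q ∣ (s \ W).card := by
        rw [card_sdiff_of_subset hWs, hWcard]
        exact Nat.dvd_sub h dvd_rfl
      obtain ⟨𝓠', h1, h2, h3⟩ := ih _ hss hdvd
      have hP1 : W.powersetCard 1 = W.image ({·}) := by
        rw [powersetCard_one, map_eq_image]; rfl
      refine ⟨insert (W.powersetCard 1) 𝓠', ?_, ?_, ?_⟩
      · intro H hH
        rcases mem_insert.mp hH with rfl | hH
        · exact ⟨W, hWcard, rfl⟩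
        · exact h1 H hH
      · have cross : ∀ H ∈ 𝓠', Disjoint (W.powersetCard 1) H := by
          intro H hH
          rw [Finset.disjoint_left]
          intro g hg hgH
          have hgs : g ∈ (s \ W).image ({·}) := by
            rw [← h3]; exact mem_biUnion.mpr ⟨H, hH, hgH⟩
          rw [hP1, mem_image] at hg
          rw [mem_image] at hgs
          obtain ⟨a, ha, rfl⟩ := hg
          obtain ⟨b, hb, hba⟩ := hgs
          have : b = a := Finset.singleton_injective hba
          subst this
          exact (mem_sdiff.mp hb).2 ha
        intro H₁ hH₁ H₂ hH₂ hne'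
        rcases mem_insert.mp hH₁ with rfl | hH₁ <;> rcases mem_insert.mp hH₂ with rfl | hH₂
        · exact absurd rfl hne'
        · exact cross _ hH₂
        · exact (cross _ hH₁).symm
        · exact h2 _ hH₁ _ hH₂ hne'
      · rw [biUnion_insert, h3, hP1, id_eq, ← image_union, union_sdiff_of_subset hWs]

end BetterAbsorbersAux

open Finset in
/-- Lemma 6.6 (Better Absorbers): if every `K_q^r`-divisible hypergraph admits a
`K_q^r`-absorber, then every `K_q^r`-divisible hypergraph `L` admits a `K_q^r`-absorber
`A` together with a `K_q^r` decomposition `𝓠` of `L ∪ A` such that every `Q ∈ 𝓠` (with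
vertex set `W`) satisfies `|W ∩ V(L)| ≤ r`, with equality only if `W ∩ V(L) = V(e)` for
some edge `e` of `L`. -/
theorem better_absorbers {V : Type*} [DecidableEq V] [Infinite V] (q r : ℕ)
    (hrq : r < q) (hr : 1 ≤ r)
    (habs : ∀ L : Finset (Finset V), (∀ e ∈ L, e.card = r) → DivisibleF q r L →
      ∃ A : Finset (Finset V), IsAbsorber q r L A)
    (L : Finset (Finset V)) (hL : ∀ e ∈ L, e.card = r) (hdiv : DivisibleF q r L) :
    ∃ A : Finset (Finset V), IsAbsorber q r L A ∧
      ∃ 𝓠 : Finset (Finset (Finset V)),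
        (∀ H ∈ 𝓠, ∃ W : Finset V, W.card = q ∧ H = W.powersetCard r ∧
          (W ∩ L.sup id).card ≤ r ∧ ((W ∩ L.sup id).card = r → W ∩ L.sup id ∈ L)) ∧
        (∀ H₁ ∈ 𝓠, ∀ H₂ ∈ 𝓠, H₁ ≠ H₂ → Disjoint H₁ H₂) ∧
        𝓠.biUnion id = L ∪ A := by
  classical
  -- fresh vertices
  have hcompl : (↑(L.sup id) : Set V)ᶜ.Infinite := (L.sup id).finite_toSet.infinite_compl
  set ψ : ℕ → V := fun n => ((Set.Infinite.natEmbedding _ hcompl) n : V) with hψdef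
  have hψinj : Function.Injective ψ :=
    fun a b hab => (Set.Infinite.natEmbedding _ hcompl).injective (Subtype.val_injective hab)
  have hψ : ∀ n, ψ n ∉ L.sup id := by
    intro n hn
    exact ((Set.Infinite.natEmbedding _ hcompl) n).2 (by simpa using hn)
  set m := q - r with hmdef
  have hm : 0 < m := by omega
  set κ : {e // e ∈ L} → ℕ := fun x => (L.equivFin x : ℕ) with hκdef
  have hκ : Function.Injective κ :=
    fun a b h => L.equivFin.injective (Fin.val_injective h)
  set F : {e // e ∈ L} → Finset V :=
    (fun x => (Finset.range m).image fun j => ψ (κ x * m + j)) with hFdef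
  have hesub : ∀ x : {e // e ∈ L}, x.1 ⊆ L.sup id :=
    fun x v hv => mem_sup.mpr ⟨x.1, x.2, hv⟩
  have hFfresh : ∀ x, ∀ v ∈ F x, v ∉ L.sup id := by
    intro x v hv
    obtain ⟨j, _, rfl⟩ := mem_image.mp hv
    exact hψ _
  have hFcard : ∀ x, (F x).card = m := by
    intro x
    rw [hFdef, card_image_of_injOn, card_range]
    intro a ha b hb hab
    have := hψinj hab
    omega
  have hFdisj : ∀ x y, x ≠ y → Disjoint (F x) (F y) := by
    intro x y hxy
    rw [Finset.disjoint_left]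
    intro v hvx hvy
    obtain ⟨a, ha, rfl⟩ := mem_image.mp hvx
    obtain ⟨b, hb, hba⟩ := mem_image.mp hvy
    rw [mem_range] at ha hb
    have heq : κ y * m + b = κ x * m + a := hψinj hba
    have : κ x = κ y := by
      have h1 : (κ x * m + a) / m = κ x := by
        rw [mul_comm, Nat.mul_add_div hm, Nat.div_eq_of_lt ha, add_zero]
      have h2 : (κ y * m + b) / m = κ y := by
        rw [mul_comm, Nat.mul_add_div hm, Nat.div_eq_of_lt hb, add_zero]
      rw [← h1, ← h2, heq]
    exact hxy (hκ this)
  set Wm : {e // e ∈ L} → Finset V := (fun x => x.1 ∪ F x) with hWdef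
  have heF : ∀ x y : {e // e ∈ L}, Disjoint x.1 (F y) := by
    intro x y
    rw [Finset.disjoint_left]
    intro v hv hvF
    exact hFfresh y v hvF (hesub x hv)
  have hWcard : ∀ x, (Wm x).card = q := by
    intro x
    rw [hWdef]
    rw [card_union_of_disjoint (heF x x), hL x.1 x.2, hFcard]
    omega
  have hWsupL : ∀ x, Wm x ∩ L.sup id = x.1 := by
    intro x
    ext v
    simp only [mem_inter, hWdef, mem_union]
    constructor
    · rintro ⟨hv1 | hv1, hv2⟩
      · exact hv1
      · exact absurd hv2 (hFfresh x v hv1)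
    · intro hv
      exact ⟨Or.inl hv, hesub x hv⟩
  have hWWsub : ∀ x y, x ≠ y → Wm x ∩ Wm y ⊆ x.1 ∩ y.1 := by
    intro x y hxy v hv
    rw [mem_inter] at hv ⊢
    obtain ⟨hvx, hvy⟩ := hv
    rw [hWdef, mem_union] at hvx hvy
    rcases hvx with hvx | hvx <;> rcases hvy with hvy | hvy
    · exact ⟨hvx, hvy⟩
    · exact absurd (hesub x hvx) (hFfresh y v hvy)
    · exact absurd (hesub y hvy) (hFfresh x v hvx)
    · exact absurd hvx (Finset.disjoint_left.mp (hFdisj x y hxy) · hvy)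
  set D : {e // e ∈ L} → Finset (Finset V) :=
    (fun x => (Wm x).powersetCard r \ {x.1}) with hDdef
  set X : Finset (Finset V) := L.attach.biUnion D with hXdef
  have hmemD : ∀ x g, g ∈ D x ↔ g ⊆ Wm x ∧ g.card = r ∧ g ≠ x.1 := by
    intro x g
    rw [hDdef]
    simp only [mem_sdiff, mem_powersetCard, mem_singleton]
    tauto
  have hDdisj : ∀ x y, x ≠ y → Disjoint (D x) (D y) := by
    intro x y hxy
    rw [Finset.disjoint_left]
    intro g hgx hgy
    rw [hmemD] at hgx hgy
    have hsub : g ⊆ x.1 :=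
      (subset_inter hgx.1 hgy.1).trans ((hWWsub x y hxy).trans inter_subset_left)
    exact hgx.2.2 (Finset.eq_of_subset_of_card_le hsub (by rw [hL x.1 x.2, hgx.2.1]))
  have hXmem : ∀ g, g ∈ X ↔ ∃ x, g ∈ D x := by
    intro g
    rw [hXdef, mem_biUnion]
    constructor
    · rintro ⟨x, _, hx⟩; exact ⟨x, hx⟩
    · rintro ⟨x, hx⟩; exact ⟨x, mem_attach _ _, hx⟩
  have hXcards : ∀ g ∈ X, g.card = r := by
    intro g hg
    obtain ⟨x, hx⟩ := (hXmem g).mp hg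
    exact ((hmemD x g).mp hx).2.1
  have hXind : ∀ g ∈ X, ¬ g ⊆ L.sup id := by
    intro g hg hsub
    obtain ⟨x, hx⟩ := (hXmem g).mp hg
    rw [hmemD] at hx
    have : g ⊆ x.1 := by
      rw [← hWsupL x]
      exact subset_inter hx.1 hsub
    exact hx.2.2 (Finset.eq_of_subset_of_card_le this (by rw [hL x.1 x.2, hx.2.1]))
  have hXdiv : DivisibleF q r X := by
    intro i hi S hS
    set C := (q - i).choose (r - i) with hCdef
    have hiltr : i < r := by omega
    have hCpos : 0 < C := Nat.choose_pos (by omega)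
    have key : ∀ x : {e // e ∈ L}, ((D x).filter (fun g => S ⊆ g)).card
        + (if S ⊆ x.1 then 1 else 0) = if S ⊆ Wm x then C else 0 := by
      intro x
      by_cases h1 : S ⊆ Wm x
      · rw [if_pos h1]
        have hcount : (((Wm x).powersetCard r).filter (fun g => S ⊆ g)).card = C := by
          rw [card_filter_powersetCard _ _ _ h1 (by omega : S.card ≤ r), hWcard, hS]
        have hDe : D x = ((Wm x).powersetCard r).erase x.1 := by
          simp only [hDdef]
          rw [sdiff_singleton_eq_erase]
        by_cases h2 : S ⊆ x.1
        · rw [if_pos h2]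
          have hxmem : x.1 ∈ ((Wm x).powersetCard r).filter (fun g => S ⊆ g) := by
            rw [mem_filter, mem_powersetCard]
            exact ⟨⟨subset_union_left, hL x.1 x.2⟩, h2⟩
          rw [hDe, filter_erase, card_erase_of_mem hxmem, hcount]
          omega
        · rw [if_neg h2]
          rw [hDe, filter_erase, erase_eq_of_notMem (by
            rw [mem_filter]; exact fun h => h2 h.2), hcount, add_zero]
      · rw [if_neg h1, if_neg (fun h2 => h1 (h2.trans subset_union_left))]
        have : (D x).filter (fun g => S ⊆ g) = ∅ := by
          rw [filter_eq_empty_iff]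
          intro g hg hSg
          exact h1 (hSg.trans ((hmemD x g).mp hg).1)
        rw [this]
        simp
    have hcard1 : ((X.filter fun g => S ⊆ g)).card
        = ∑ x ∈ L.attach, ((D x).filter (fun g => S ⊆ g)).card := by
      rw [hXdef, filter_biUnion]
      exact card_biUnion (fun x _ y _ hxy => disjoint_filter_filter (hDdisj x y hxy))
    have hsum : ∑ x ∈ L.attach, ((D x).filter (fun g => S ⊆ g)).card
        + ∑ x ∈ L.attach, (if S ⊆ x.1 then 1 else 0)
        = ∑ x ∈ L.attach, (if S ⊆ Wm x then C else 0) := by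
      rw [← Finset.sum_add_distrib]
      exact Finset.sum_congr rfl (fun x _ => key x)
    have hdeg : ∑ x ∈ L.attach, (if S ⊆ x.1 then 1 else 0)
        = (L.filter fun e => S ⊆ e).card := by
      rw [Finset.card_filter, ← Finset.sum_attach L (fun e => if S ⊆ e then 1 else 0)]
    have hdvd2 : C ∣ ∑ x ∈ L.attach, (if S ⊆ Wm x then C else 0) := by
      refine Finset.dvd_sum (fun x _ => ?_)
      split
      · exact dvd_rfl
      · exact dvd_zero _
    have hdvdL : C ∣ (L.filter fun e => S ⊆ e).card := hdiv i hi S hS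
    rw [hcard1]
    have htot : C ∣ (L.filter fun e => S ⊆ e).card
        + ∑ x ∈ L.attach, ((D x).filter (fun g => S ⊆ g)).card := by
      rw [add_comm, ← hdeg, hsum]
      exact hdvd2
    exact (Nat.dvd_add_right hdvdL).mp htot
  -- the clique decomposition of L ∪ X
  set 𝓠c : Finset (Finset (Finset V)) :=
    L.attach.image (fun x => (Wm x).powersetCard r) with h𝓠cdef
  have hmemc : ∀ x : {e // e ∈ L}, x.1 ∈ (Wm x).powersetCard r := by
    intro x
    rw [mem_powersetCard]
    exact ⟨subset_union_left, hL x.1 x.2⟩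
  have hPW : ∀ (x : {e // e ∈ L}) (g : Finset V),
      g ∈ (Wm x).powersetCard r ↔ g = x.1 ∨ g ∈ D x := by
    intro x g
    rw [hmemD, mem_powersetCard]
    constructor
    · rintro ⟨h1, h2⟩
      by_cases h3 : g = x.1
      · exact Or.inl h3
      · exact Or.inr ⟨h1, h2, h3⟩
    · rintro (rfl | ⟨h1, h2, _⟩)
      · exact ⟨subset_union_left, hL x.1 x.2⟩
      · exact ⟨h1, h2⟩
  have hccover : 𝓠c.biUnion id = L ∪ X := by
    ext g
    simp only [mem_biUnion, h𝓠cdef, mem_image, id_eq, mem_union]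
    constructor
    · rintro ⟨H, ⟨x, _, rfl⟩, hg⟩
      rcases (hPW x g).mp hg with rfl | hg'
      · exact Or.inl x.2
      · exact Or.inr ((hXmem g).mpr ⟨x, hg'⟩)
    · rintro (hg | hg)
      · exact ⟨(Wm ⟨g, hg⟩).powersetCard r, ⟨⟨g, hg⟩, mem_attach _ _, rfl⟩, hmemc ⟨g, hg⟩⟩
      · obtain ⟨x, hx⟩ := (hXmem g).mp hg
        exact ⟨(Wm x).powersetCard r, ⟨x, mem_attach _ _, rfl⟩, (hPW x g).mpr (Or.inr hx)⟩
  have hcdisj : ∀ H₁ ∈ 𝓠c, ∀ H₂ ∈ 𝓠c, H₁ ≠ H₂ → Disjoint H₁ H₂ := by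
    intro H₁ h₁ H₂ h₂ hne
    obtain ⟨x, _, rfl⟩ := mem_image.mp h₁
    obtain ⟨y, _, rfl⟩ := mem_image.mp h₂
    have hxy : x ≠ y := fun h => hne (by rw [h])
    rw [Finset.disjoint_left]
    intro g hgx hgy
    rw [mem_powersetCard] at hgx hgy
    have hsubx : g ⊆ x.1 :=
      (subset_inter hgx.1 hgy.1).trans ((hWWsub x y hxy).trans inter_subset_left)
    have hsuby : g ⊆ y.1 :=
      (subset_inter hgx.1 hgy.1).trans ((hWWsub x y hxy).trans inter_subset_right)
    have h1 : g = x.1 := Finset.eq_of_subset_of_card_le hsubx (by rw [hL x.1 x.2, hgx.2])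
    have h2 : g = y.1 := Finset.eq_of_subset_of_card_le hsuby (by rw [hL y.1 y.2, hgx.2])
    exact hxy (Subtype.ext (h1 ▸ h2))
  have hcprops : ∀ H ∈ 𝓠c, ∃ W : Finset V, W.card = q ∧ H = W.powersetCard r ∧
      (W ∩ L.sup id).card ≤ r ∧ ((W ∩ L.sup id).card = r → W ∩ L.sup id ∈ L) := by
    intro H hH
    obtain ⟨x, _, rfl⟩ := mem_image.mp hH
    refine ⟨Wm x, hWcard x, rfl, ?_, ?_⟩
    · rw [hWsupL x, hL x.1 x.2]
    · intro _
      rw [hWsupL x]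
      exact x.2
  by_cases hr2 : 2 ≤ r
  · -- main case: use the absorber hypothesis on X
    obtain ⟨B, hBind, hBdec, hXB⟩ := habs X hXcards hXdiv
    have hXD : ∀ (x : {e // e ∈ L}) (g : Finset V), g ∈ D x → g ∈ X :=
      fun x g hg => (hXmem g).mpr ⟨x, hg⟩
    have hLsub : L.sup id ⊆ X.sup id := by
      intro v hv
      obtain ⟨e, he, hve⟩ := mem_sup.mp hv
      rw [id_eq] at hve
      set x : {e // e ∈ L} := (⟨e, he⟩ : {e // e ∈ L}) with hxdef
      have hecard : e.card = r := hL e he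
      have hodd : (e.erase v).Nonempty := by
        rw [← card_pos, card_erase_of_mem hve, hecard]
        omega
      obtain ⟨w, hw⟩ := hodd
      have hFne : (F x).Nonempty := by
        rw [← card_pos, hFcard]
        exact hm
      obtain ⟨u, hu⟩ := hFne
      have hue : u ∉ e := fun h => hFfresh x u hu (hesub x h)
      set g := insert u (e.erase w) with hgdef
      have hgsub : g ⊆ Wm x := by
        intro z hz
        rcases mem_insert.mp hz with rfl | hz
        · exact mem_union_right _ hu
        · exact mem_union_left _ (erase_subset _ _ hz)
      have hgcard : g.card = r := by
        rw [hgdef, card_insert_of_notMem (fun h => hue (erase_subset _ _ h)),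
          card_erase_of_mem (mem_of_mem_erase hw), hecard]
        omega
      have hgne : g ≠ e := by
        intro h
        exact hue (h ▸ mem_insert_self u _)
      have hvg : v ∈ g := by
        rw [hgdef, mem_insert]
        right
        rw [mem_erase]
        exact ⟨fun h => (mem_erase.mp hw).1 h.symm, hve⟩
      exact mem_sup.mpr ⟨g, hXD x g ((hmemD x g).mpr ⟨hgsub, hgcard, hgne⟩), hvg⟩
    have hWsub : ∀ x : {e // e ∈ L}, Wm x ⊆ X.sup id := by
      intro x v hv
      rcases mem_union.mp hv with hve | hvF
      · exact hLsub (hesub x hve)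
      · have hene : (x.1 : Finset V).Nonempty := by
          rw [← card_pos, hL x.1 x.2]
          omega
        obtain ⟨w, hw⟩ := hene
        have hvnot : v ∉ (x.1 : Finset V) := fun h => hFfresh x v hvF (hesub x h)
        set g := insert v (x.1.erase w) with hgdef
        have hgsub : g ⊆ Wm x := by
          intro z hz
          rcases mem_insert.mp hz with rfl | hz
          · exact mem_union_right _ hvF
          · exact mem_union_left _ (erase_subset _ _ hz)
        have hgcard : g.card = r := by
          rw [hgdef, card_insert_of_notMem (fun h => hvnot (erase_subset _ _ h)),
            card_erase_of_mem hw, hL x.1 x.2]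
          omega
        have hgne : g ≠ x.1 := fun h => hvnot (h ▸ mem_insert_self v _)
        exact mem_sup.mpr ⟨g, hXD x g ((hmemD x g).mpr ⟨hgsub, hgcard, hgne⟩),
          mem_insert_self v _⟩
    obtain ⟨𝓠B, hB1, hB2, hB3⟩ := hBdec
    have hBpsub : ∀ H ∈ 𝓠B, H ⊆ B := by
      intro H hH g hg
      rw [← hB3]
      exact mem_biUnion.mpr ⟨H, hH, hg⟩
    have hcross : ∀ H₁ ∈ 𝓠c, ∀ H₂ ∈ 𝓠B, Disjoint H₁ H₂ := by
      intro H₁ h₁ H₂ h₂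
      obtain ⟨x, _, rfl⟩ := mem_image.mp h₁
      rw [Finset.disjoint_left]
      intro g hg hg2
      rw [mem_powersetCard] at hg
      exact hBind g (hBpsub H₂ h₂ hg2) (hg.1.trans (hWsub x))
    have hdisjall : ∀ H₁ ∈ 𝓠c ∪ 𝓠B, ∀ H₂ ∈ 𝓠c ∪ 𝓠B, H₁ ≠ H₂ → Disjoint H₁ H₂ := by
      intro H₁ h₁ H₂ h₂ hne
      rcases mem_union.mp h₁ with h₁ | h₁ <;> rcases mem_union.mp h₂ with h₂ | h₂
      · exact hcdisj _ h₁ _ h₂ hne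
      · exact hcross _ h₁ _ h₂
      · exact (hcross _ h₂ _ h₁).symm
      · exact hB2 _ h₁ _ h₂ hne
    have hbiun : (𝓠c ∪ 𝓠B).biUnion id = L ∪ (X ∪ B) := by
      ext g
      simp only [mem_biUnion, mem_union]
      constructor
      · rintro ⟨H, hH, hg⟩
        rcases hH with hH | hH
        · have : g ∈ 𝓠c.biUnion id := mem_biUnion.mpr ⟨H, hH, hg⟩
          rw [hccover] at this
          rcases mem_union.mp this with h | h
          · exact Or.inl h
          · exact Or.inr (Or.inl h)
        · exact Or.inr (Or.inr (hBpsub H hH hg))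
      · rintro (hg | hg | hg)
        · have : g ∈ 𝓠c.biUnion id := by rw [hccover]; exact mem_union_left _ hg
          obtain ⟨H, hH, hgH⟩ := mem_biUnion.mp this
          exact ⟨H, Or.inl hH, hgH⟩
        · have : g ∈ 𝓠c.biUnion id := by rw [hccover]; exact mem_union_right _ hg
          obtain ⟨H, hH, hgH⟩ := mem_biUnion.mp this
          exact ⟨H, Or.inl hH, hgH⟩
        · have : g ∈ 𝓠B.biUnion id := by rw [hB3]; exact hg
          obtain ⟨H, hH, hgH⟩ := mem_biUnion.mp this
          exact ⟨H, Or.inr hH, hgH⟩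
    refine ⟨X ∪ B, ⟨?_, hXB, ?_⟩, ?_⟩
    · intro g hg hsub
      rcases mem_union.mp hg with hg | hg
      · exact hXind g hg hsub
      · exact hBind g hg (hsub.trans hLsub)
    · exact ⟨𝓠c ∪ 𝓠B, by
        intro H hH
        rcases mem_union.mp hH with hH | hH
        · obtain ⟨W, h1, h2, _, _⟩ := hcprops H hH
          exact ⟨W, h1, h2⟩
        · exact hB1 H hH, hdisjall, hbiun⟩
    · refine ⟨𝓠c ∪ 𝓠B, ?_, hdisjall, hbiun⟩
      intro H hH
      rcases mem_union.mp hH with hH | hH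
      · exact hcprops H hH
      · obtain ⟨W, hWq, rfl⟩ := hB1 H hH
        have hlt : (W ∩ L.sup id).card < r := by
          by_contra hge
          push_neg at hge
          obtain ⟨S, hSsub, hScard⟩ := Finset.exists_subset_card_eq hge
          have hSW : S ∈ W.powersetCard r :=
            mem_powersetCard.mpr ⟨hSsub.trans inter_subset_left, hScard⟩
          exact hBind S (hBpsub _ hH hSW)
            ((hSsub.trans inter_subset_right).trans hLsub)
        exact ⟨W, hWq, rfl, le_of_lt hlt, fun h => absurd h (Nat.ne_of_lt hlt)⟩
  · -- degenerate case r = 1 : no absorber needed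
    have hr1 : r = 1 := by omega
    subst hr1
    have hDF : ∀ x : {e // e ∈ L}, D x = (F x).image ({·}) := by
      intro x
      ext g
      rw [hmemD]
      constructor
      · rintro ⟨hsub, hcard, hne⟩
        obtain ⟨u, rfl⟩ := card_eq_one.mp hcard
        have hu : u ∈ Wm x := hsub (mem_singleton_self u)
        rcases mem_union.mp hu with h | h
        · exfalso
          apply hne
          obtain ⟨w, hw⟩ := card_eq_one.mp (hL x.1 x.2)
          rw [hw] at h ⊢
          rw [mem_singleton] at h
          rw [h]
        · exact mem_image.mpr ⟨u, h, rfl⟩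
      · intro hg
        obtain ⟨u, hu, rfl⟩ := mem_image.mp hg
        refine ⟨singleton_subset_iff.mpr (mem_union_right _ hu), card_singleton u, ?_⟩
        intro h
        exact hFfresh x u hu (hesub x (h ▸ mem_singleton_self u))
    have hXeq : X = (L.attach.biUnion F).image ({·}) := by
      rw [hXdef, biUnion_image]
      exact biUnion_congr rfl (fun x _ => hDF x)
    have hqdvdL : q ∣ L.card := by
      have h0 := hdiv 0 (by omega) ∅ rfl
      simpa [Nat.choose_one_right, filter_true_of_mem (fun e _ => empty_subset e)] using h0
    have hdvd : q ∣ (L.attach.biUnion F).card := by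
      rw [card_biUnion (fun x _ y _ hxy => hFdisj x y hxy)]
      have : ∑ x ∈ L.attach, (F x).card = L.card * m := by
        rw [Finset.sum_congr rfl (fun x _ => hFcard x), Finset.sum_const, card_attach,
          smul_eq_mul]
      rw [this]
      exact Dvd.dvd.mul_right hqdvdL m
    have hdecX : HasDecomp q 1 X := by
      rw [hXeq]
      exact hasDecomp_singletons q (by omega) _ hdvd
    exact ⟨X, ⟨hXind, hdecX, ⟨𝓠c, fun H hH => by
      obtain ⟨W, h1, h2, _, _⟩ := hcprops H hH
      exact ⟨W, h1, h2⟩, hcdisj, hccover⟩⟩, ⟨𝓠c, hcprops, hcdisj, hccover⟩⟩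
end
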